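/- For nonnegative integers n and \(\ell\), and real a, b, c with \(b-a \notin \{1,2,3,\ldots\}\), one has \(\sum_{k=0}^n \frac{(-n)_k(a)_k(c+\ell)_k}{\Gamma(b+k)\Gamma(c+k)\,k!} = \frac{1}{\Gamma(n+b)}\sum_{k=0}^{\ell} \frac{(-n)_k(-\ell)_k(a)_k(b-a-k)_n}{(a-b+1)_k\,\Gamma(c+k)\,k!}\). -/
import Mathlib

open Finset

/-- Rising factorial (Pochhammer symbol) `(x)_k = x(x+1)⋯(x+k-1)`. -/
noncomputable def poch (x : ℝ) (k : ℕ) : ℝ := (ascPochhammer ℝ k).eval x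

/-- Generalized binomial coefficient `C(y, m) = (y-m+1)_m / m!` for real `y`. -/
noncomputable def gbinom (y : ℝ) (m : ℕ) : ℝ := poch (y - m + 1) m / m.factorial

/-- Generalized binomial coefficient with integer lower index, zero for negative index. -/
noncomputable def gbinomZ (y : ℝ) (m : ℤ) : ℝ := if 0 ≤ m then gbinom y m.toNat else 0

/-- Generalized Laguerre polynomial `L_n^{(a)}(x)`, defined for all real `a`. -/
noncomputable def Lag (n : ℕ) (a : ℝ) (x : ℝ) : ℝ :=
  ∑ k ∈ range (n + 1),
    (-1 : ℝ) ^ k * poch (a + k + 1) (n - k) / (n - k).factorial * x ^ k / k.factorial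

lemma poch_zero (x : ℝ) : poch x 0 = 1 := by simp [poch]

lemma poch_succ (x : ℝ) (k : ℕ) : poch x (k+1) = poch x k * (x + k) :=
  ascPochhammer_succ_eval k x

lemma poch_succ_left (x : ℝ) (k : ℕ) : poch x (k+1) = x * poch (x+1) k := by
  simp [poch, ascPochhammer_succ_left, Polynomial.eval_comp]

lemma poch_add (x : ℝ) (j i : ℕ) : poch x (j+i) = poch x j * poch (x+j) i := by
  rw [poch, ← ascPochhammer_mul, Polynomial.eval_mul, Polynomial.eval_comp]
  simp [poch]

lemma poch_neg_nat_eq_zero {n j : ℕ} (h : n < j) : poch (-(n:ℝ)) j = 0 := by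
  obtain ⟨i, rfl⟩ := Nat.exists_eq_add_of_le h
  rw [show n + 1 + i = (n+1)+i from rfl, poch_add, poch_succ]
  simp

lemma recip_gamma_shift (x : ℝ) (m : ℕ) :
    1 / Real.Gamma x = poch x m / Real.Gamma (x + m) := by
  induction m with
  | zero => simp [poch_zero]
  | succ m ih =>
    by_cases hx : x + m = 0
    · have hxm : x = -(m:ℕ) := by linarith
      rw [hxm, Real.Gamma_neg_nat_eq_zero, poch_succ]
      simp
    · rw [ih, poch_succ, show x + ((m:ℕ)+1 : ℕ) = (x + m) + 1 by push_cast; ring,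
        Real.Gamma_add_one hx]
      rw [mul_comm (x+m) (Real.Gamma (x+m)), mul_div_mul_right _ _ hx]

lemma poch_neg_nat_choose {m : ℕ} : ∀ {i : ℕ}, i ≤ m →
    poch (-(m:ℝ)) i = (-1:ℝ)^i * i.factorial * m.choose i := by
  intro i
  induction i with
  | zero => intro _; simp [poch_zero]
  | succ i ih =>
    intro hi
    have hi' : i ≤ m := by omega
    rw [poch_succ, ih hi']
    have key : (m.choose (i+1) : ℝ) * (i+1) = m.choose i * ((m:ℝ) - i) := by
      have h1 := Nat.choose_succ_right_eq m i
      calc (m.choose (i+1) : ℝ) * (i+1) = ((m.choose (i+1) * (i+1) : ℕ) : ℝ) := by push_cast; ring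
        _ = ((m.choose i * (m - i) : ℕ) : ℝ) := by rw [h1]
        _ = m.choose i * ((m:ℝ) - i) := by push_cast [Nat.cast_sub hi']; ring
    have hfac : ((i+1).factorial : ℝ) = (i.factorial : ℝ) * (i+1) := by
      rw [Nat.factorial_succ]; push_cast; ring
    rw [hfac]
    linear_combination ((-1:ℝ)^i * i.factorial) * key

lemma poch_sub_nat (j : ℕ) : ∀ x : ℝ, poch (x - j) j = (-1:ℝ)^j * poch (1 - x) j := by
  induction j with
  | zero => intro x; simp [poch_zero]
  | succ j ih =>
    intro x
    rw [poch_succ, poch_succ_left (1-x)]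
    have h1 : (x - (j+1:ℕ) : ℝ) = (x-1) - j := by push_cast; ring
    rw [h1, ih (x-1)]
    have h2 : (1 - (x-1) : ℝ) = (1 - x) + 1 := by ring
    rw [h2]
    ring

lemma vandermonde_poly (m : ℕ) : ∀ (A B : ℝ),
    ∑ i ∈ range (m+1), (-1:ℝ)^i * (m.choose i) * poch A i * poch (B+i) (m-i)
      = poch (B-A) m := by
  induction m with
  | zero => intro A B; simp [poch_zero]
  | succ m ih =>
    intro A B
    calc ∑ i ∈ range (m+1+1), (-1:ℝ)^i * ((m+1).choose i) * poch A i * poch (B+i) (m+1-i)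
        = ∑ i ∈ range (m+1), ((-1:ℝ)^(i+1) * (m.choose (i+1)) * poch A (i+1) * poch (B+(i+1:ℕ)) (m+1-(i+1))
            + (-1:ℝ)^(i+1) * (m.choose i) * poch A (i+1) * poch (B+(i+1:ℕ)) (m-i))
          + (-1:ℝ)^0 * ((m:ℕ).choose 0) * poch A 0 * poch (B+(0:ℕ)) (m+1-0) := by
          rw [Finset.sum_range_succ']
          congr 1
          · apply Finset.sum_congr rfl
            intro i hi
            rw [Nat.choose_succ_succ]
            have : m + 1 - (i+1) = m - i := by omega
            rw [this]
            push_cast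
            ring
          · norm_num
      _ = (∑ i ∈ range (m+1+1), (-1:ℝ)^i * (m.choose i) * poch A i * poch (B+i) (m+1-i))
          + ∑ i ∈ range (m+1), (-1:ℝ)^(i+1) * (m.choose i) * poch A (i+1) * poch (B+(i+1:ℕ)) (m-i) := by
          rw [Finset.sum_add_distrib, Finset.sum_range_succ' (fun i => (-1:ℝ)^i * (m.choose i) * poch A i * poch (B+i) (m+1-i))]
          push_cast
          ring
      _ = ∑ i ∈ range (m+1), ((-1:ℝ)^i * (m.choose i) * poch A i * poch (B+i) (m+1-i)
            + (-1:ℝ)^(i+1) * (m.choose i) * poch A (i+1) * poch (B+(i+1:ℕ)) (m-i)) := by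
          rw [Finset.sum_range_succ, Finset.sum_add_distrib]
          simp [Nat.choose_succ_self]
      _ = (B-A) * ∑ i ∈ range (m+1), (-1:ℝ)^i * (m.choose i) * poch A i * poch ((B+1)+i) (m-i) := by
          rw [Finset.mul_sum]
          apply Finset.sum_congr rfl
          intro i hi
          have hi' : i ≤ m := by simpa [Nat.lt_succ_iff] using hi
          have h1 : m + 1 - i = (m - i) + 1 := by omega
          rw [h1, poch_succ_left (B+i), poch_succ A i]
          have h2 : (B + (i+1:ℕ) : ℝ) = (B + i) + 1 := by push_cast; ring
          have h3 : ((B+1)+i : ℝ) = (B + i) + 1 := by ring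
          rw [h2, h3]
          ring
      _ = (B-A) * poch ((B+1)-A) m := by rw [ih]
      _ = poch (B-A) (m+1) := by rw [poch_succ_left]; ring_nf

lemma reg_vandermonde (m : ℕ) (A B : ℝ) :
    ∑ i ∈ range (m+1), poch (-(m:ℝ)) i * poch A i / (Real.Gamma (B+i) * i.factorial)
      = poch (B-A) m / Real.Gamma (B+m) := by
  rw [← vandermonde_poly m A B, Finset.sum_div]
  apply Finset.sum_congr rfl
  intro i hi
  have hi' : i ≤ m := by simpa [Nat.lt_succ_iff] using hi
  have hf : (i.factorial : ℝ) ≠ 0 := by exact_mod_cast i.factorial_ne_zero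
  have hG : (1:ℝ)/Real.Gamma (B+i) = poch (B+(i:ℝ)) (m-i) / Real.Gamma (B+m) := by
    have := recip_gamma_shift (B+(i:ℝ)) (m-i)
    rwa [show (B+(i:ℝ)) + ((m-i:ℕ):ℝ) = B + m by push_cast [Nat.cast_sub hi']; ring] at this
  have e1 : poch (-(m:ℝ)) i * poch A i = ((-1:ℝ)^i * m.choose i * poch A i) * i.factorial := by
    rw [poch_neg_nat_choose hi']; ring
  rw [e1, mul_div_mul_right _ _ hf, div_eq_mul_one_div, hG]
  ring

lemma poch_gamma_symm (c : ℝ) (k l : ℕ) :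
    poch (c+(k:ℝ)) l / Real.Gamma (c+l) = poch (c+(l:ℝ)) k / Real.Gamma (c+k) := by
  have h1 := recip_gamma_shift (c+(l:ℝ)) k
  have h2 := recip_gamma_shift (c+(k:ℝ)) l
  calc poch (c+(k:ℝ)) l / Real.Gamma (c+l)
      = poch (c+(k:ℝ)) l * (1/Real.Gamma (c+(l:ℝ))) := by ring
    _ = poch (c+(k:ℝ)) l * (poch (c+(l:ℝ)) k / Real.Gamma (c+(l:ℝ)+(k:ℝ))) := by rw [h1]
    _ = poch (c+(l:ℝ)) k * (poch (c+(k:ℝ)) l / Real.Gamma (c+(k:ℝ)+(l:ℝ))) := by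
        rw [show c+(l:ℝ)+(k:ℝ) = c+(k:ℝ)+(l:ℝ) by ring]; ring
    _ = poch (c+(l:ℝ)) k * (1/Real.Gamma (c+(k:ℝ))) := by rw [← h2]
    _ = poch (c+(l:ℝ)) k / Real.Gamma (c+k) := by ring

lemma innerSumCV (n j : ℕ) (a b : ℝ) :
    ∑ k ∈ range (n+1),
        poch (-(n:ℝ)) k * poch a k * poch (-(k:ℝ)) j / (Real.Gamma (b+k) * k.factorial)
      = (-1:ℝ)^j * poch (-(n:ℝ)) j * poch a j * poch (b-a) (n-j) / Real.Gamma (b+n) := by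
  by_cases hjn : j ≤ n
  · have h1 : ∑ k ∈ range (n+1),
        poch (-(n:ℝ)) k * poch a k * poch (-(k:ℝ)) j / (Real.Gamma (b+k) * k.factorial)
        = ∑ k ∈ Ico j (n+1),
        poch (-(n:ℝ)) k * poch a k * poch (-(k:ℝ)) j / (Real.Gamma (b+k) * k.factorial) := by
      rw [range_eq_Ico, ← Finset.sum_Ico_consecutive _ (Nat.zero_le j) (by omega : j ≤ n+1)]
      have hz : ∑ k ∈ Ico 0 j,
          poch (-(n:ℝ)) k * poch a k * poch (-(k:ℝ)) j / (Real.Gamma (b+k) * k.factorial) = 0 := by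
        apply Finset.sum_eq_zero
        intro k hk
        have hkj : k < j := (Finset.mem_Ico.mp hk).2
        rw [poch_neg_nat_eq_zero hkj]
        ring
      rw [hz, zero_add]
    rw [h1, Finset.sum_Ico_eq_sum_range, show n + 1 - j = (n-j) + 1 by omega]
    have h2 : ∀ i ∈ range ((n-j)+1),
        poch (-(n:ℝ)) (j+i) * poch a (j+i) * poch (-((j+i:ℕ):ℝ)) j /
          (Real.Gamma (b+((j+i:ℕ):ℝ)) * ((j+i).factorial : ℕ))
        = (poch (-(n:ℝ)) j * poch a j * (-1:ℝ)^j) *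
          (poch (-((n-j:ℕ):ℝ)) i * poch (a+(j:ℝ)) i / (Real.Gamma ((b+(j:ℝ))+(i:ℝ)) * i.factorial)) := by
      intro i hi
      have hF : (((j+i).factorial : ℕ) : ℝ) ≠ 0 := by exact_mod_cast (j+i).factorial_ne_zero
      have hfi : ((i.factorial : ℕ) : ℝ) ≠ 0 := by exact_mod_cast i.factorial_ne_zero
      have hc : (((j+i).choose j * j.factorial * i.factorial : ℕ) : ℝ) = (((j+i).factorial : ℕ) : ℝ) := by
        have h3 := Nat.choose_mul_factorial_mul_factorial (Nat.le_add_right j i)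
        rw [Nat.add_sub_cancel_left] at h3
        exact_mod_cast h3
      have hpj : poch (-((j+i:ℕ):ℝ)) j * (i.factorial : ℝ) = (-1:ℝ)^j * ((j+i).factorial : ℝ) := by
        rw [poch_neg_nat_choose (Nat.le_add_right j i)]
        push_cast at hc ⊢
        linear_combination ((-1:ℝ)^j) * hc
      have hX : poch (-((j+i:ℕ):ℝ)) j / (((j+i).factorial : ℕ) : ℝ) = (-1:ℝ)^j / ((i.factorial : ℕ) : ℝ) := by
        rw [div_eq_div_iff hF hfi]
        exact hpj
      rw [show (b + ((j+i:ℕ):ℝ)) = (b+(j:ℝ))+(i:ℝ) by push_cast; ring,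
        poch_add (-(n:ℝ)) j i, poch_add a j i,
        show -(n:ℝ)+(j:ℝ) = -((n-j:ℕ):ℝ) by push_cast [Nat.cast_sub hjn]; ring]
      calc poch (-(n:ℝ)) j * poch (-((n-j:ℕ):ℝ)) i * (poch a j * poch (a+(j:ℝ)) i) * poch (-((j+i:ℕ):ℝ)) j /
            (Real.Gamma ((b+(j:ℝ))+(i:ℝ)) * ((j+i).factorial : ℕ))
          = (poch (-(n:ℝ)) j * poch a j * poch (-((n-j:ℕ):ℝ)) i * poch (a+(j:ℝ)) i *
              (1/Real.Gamma ((b+(j:ℝ))+(i:ℝ)))) * (poch (-((j+i:ℕ):ℝ)) j / (((j+i).factorial : ℕ) : ℝ)) := by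
            ring
        _ = (poch (-(n:ℝ)) j * poch a j * poch (-((n-j:ℕ):ℝ)) i * poch (a+(j:ℝ)) i *
              (1/Real.Gamma ((b+(j:ℝ))+(i:ℝ)))) * ((-1:ℝ)^j / ((i.factorial : ℕ) : ℝ)) := by
            rw [hX]
        _ = (poch (-(n:ℝ)) j * poch a j * (-1:ℝ)^j) *
            (poch (-((n-j:ℕ):ℝ)) i * poch (a+(j:ℝ)) i / (Real.Gamma ((b+(j:ℝ))+(i:ℝ)) * i.factorial)) := by
            ring
    rw [Finset.sum_congr rfl h2, ← Finset.mul_sum, reg_vandermonde (n-j) (a+(j:ℝ)) (b+(j:ℝ)),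
      show (b+(j:ℝ))-(a+(j:ℝ)) = b-a by ring,
      show (b+(j:ℝ))+((n-j:ℕ):ℝ) = b+(n:ℝ) by push_cast [Nat.cast_sub hjn]; ring]
    ring
  · have h0 : ∑ k ∈ range (n+1),
        poch (-(n:ℝ)) k * poch a k * poch (-(k:ℝ)) j / (Real.Gamma (b+k) * k.factorial) = 0 := by
      apply Finset.sum_eq_zero
      intro k hk
      have hkj : k < j := by have := Finset.mem_range.mp hk; omega
      rw [poch_neg_nat_eq_zero hkj]
      ring
    rw [h0, poch_neg_nat_eq_zero (show n < j by omega)]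
    ring

theorem reg_hypergeometric_3F2_contiguous (n l : ℕ) (a b c : ℝ)
    (h : ∀ m : ℕ, b - a ≠ (m : ℝ) + 1) :
    ∑ k ∈ range (n + 1),
        poch (-(n : ℝ)) k * poch a k * poch (c + l) k /
          (Real.Gamma (b + k) * Real.Gamma (c + k) * k.factorial)
      = 1 / Real.Gamma ((n : ℝ) + b) *
        ∑ k ∈ range (l + 1),
          poch (-(n : ℝ)) k * poch (-(l : ℝ)) k * poch a k * poch (b - a - k) n /
            (poch (a - b + 1) k * Real.Gamma (c + k) * k.factorial) := by
  have hA : ∀ j : ℕ, poch (a-b+1) j ≠ 0 := by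
    intro j
    induction j with
    | zero => rw [poch_zero]; norm_num
    | succ j ih =>
      rw [poch_succ]
      refine mul_ne_zero ih ?_
      intro hz
      exact h j (by linarith)
  have step1 : ∀ k : ℕ, poch (c+(l:ℝ)) k / Real.Gamma (c+k)
      = ∑ j ∈ range (l+1), poch (-(l:ℝ)) j * poch (-(k:ℝ)) j / (Real.Gamma (c+j) * j.factorial) := by
    intro k
    rw [reg_vandermonde l (-(k:ℝ)) c, show c - -(k:ℝ) = c + (k:ℝ) by ring, poch_gamma_symm]
  calc ∑ k ∈ range (n + 1),
        poch (-(n : ℝ)) k * poch a k * poch (c + l) k /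
          (Real.Gamma (b + k) * Real.Gamma (c + k) * k.factorial)
      = ∑ k ∈ range (n+1), ∑ j ∈ range (l+1),
          (poch (-(n:ℝ)) k * poch a k / (Real.Gamma (b+k) * k.factorial)) *
          (poch (-(l:ℝ)) j * poch (-(k:ℝ)) j / (Real.Gamma (c+j) * j.factorial)) := by
        apply Finset.sum_congr rfl
        intro k _
        rw [← Finset.mul_sum, ← step1 k]
        ring
    _ = ∑ j ∈ range (l+1), (poch (-(l:ℝ)) j / (Real.Gamma (c+j) * j.factorial)) *
          ∑ k ∈ range (n+1),
            poch (-(n:ℝ)) k * poch a k * poch (-(k:ℝ)) j / (Real.Gamma (b+k) * k.factorial) := by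
        rw [Finset.sum_comm]
        apply Finset.sum_congr rfl
        intro j _
        rw [Finset.mul_sum]
        apply Finset.sum_congr rfl
        intro k _
        ring
    _ = ∑ j ∈ range (l+1), (poch (-(l:ℝ)) j / (Real.Gamma (c+j) * j.factorial)) *
          ((-1:ℝ)^j * poch (-(n:ℝ)) j * poch a j * poch (b-a) (n-j) / Real.Gamma (b+n)) := by
        apply Finset.sum_congr rfl
        intro j _
        rw [innerSumCV n j a b]
    _ = 1 / Real.Gamma ((n : ℝ) + b) *
        ∑ k ∈ range (l + 1),
          poch (-(n : ℝ)) k * poch (-(l : ℝ)) k * poch a k * poch (b - a - k) n /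
            (poch (a - b + 1) k * Real.Gamma (c + k) * k.factorial) := by
        rw [show (n:ℝ) + b = b + (n:ℝ) by ring, Finset.mul_sum]
        apply Finset.sum_congr rfl
        intro j _
        have dagger : poch (-(n:ℝ)) j * ((-1:ℝ)^j * poch (b-a) (n-j)) * poch (a-b+1) j
            = poch (-(n:ℝ)) j * poch (b-a-(j:ℝ)) n := by
          by_cases hjn : j ≤ n
          · have e : poch (b-a-(j:ℝ)) n = poch (b-a-(j:ℝ)) j * poch (b-a) (n-j) := by
              rw [show n = j + (n-j) from (by omega), poch_add,
                show b-a-(j:ℝ)+(j:ℝ) = b-a by ring]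
              simp [Nat.add_sub_cancel_left]
            rw [e, poch_sub_nat j (b-a), show (1:ℝ) - (b-a) = a-b+1 by ring]
            ring
          · rw [poch_neg_nat_eq_zero (show n < j by omega)]
            ring
        have d2 : poch (-(n:ℝ)) j * poch (b-a-(j:ℝ)) n / poch (a-b+1) j
            = poch (-(n:ℝ)) j * ((-1:ℝ)^j * poch (b-a) (n-j)) := by
          rw [div_eq_iff (hA j)]
          linarith [dagger]
        calc poch (-(l:ℝ)) j / (Real.Gamma (c+j) * j.factorial) *
              ((-1:ℝ)^j * poch (-(n:ℝ)) j * poch a j * poch (b-a) (n-j) / Real.Gamma (b+n))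
            = (poch (-(n:ℝ)) j * ((-1:ℝ)^j * poch (b-a) (n-j))) *
              (poch (-(l:ℝ)) j * poch a j / (Real.Gamma (c+j) * (j.factorial:ℝ) * Real.Gamma (b+(n:ℝ)))) := by
              ring
          _ = (poch (-(n:ℝ)) j * poch (b-a-(j:ℝ)) n / poch (a-b+1) j) *
              (poch (-(l:ℝ)) j * poch a j / (Real.Gamma (c+j) * (j.factorial:ℝ) * Real.Gamma (b+(n:ℝ)))) := by
              rw [d2]
          _ = 1 / Real.Gamma (b + (n:ℝ)) *
              (poch (-(n : ℝ)) j * poch (-(l : ℝ)) j * poch a j * poch (b - a - j) n /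
                (poch (a - b + 1) j * Real.Gamma (c + j) * j.factorial)) := by
              ring
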